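/- Let ℒ ⊂ ℝ^{n+1} be a lattice, y0 > 0, k ∈ ℒ*, and let V be the ℂ-linear span of {ω_{δk} : δ ∈ H_ℒ}. Then W = Π_{y0}(V) is a subspace of functions on ℝ^n that is invariant under all translations (for every v ∈ ℝ^n and g ∈ W, the function x ↦ g(x − v) lies in W) and invariant under J̃ (for every α ∈ J̃ and g ∈ W, the function x ↦ g(α⁻¹x) lies in W). -/

import Mathlib

open MeasureTheory
open scoped Classical

noncomputable section

/-- The Euclidean dot product on `ℝⁿ`. -/
def dotn {n : ℕ} (a b : Fin n → ℝ) : ℝ := ∑ i, a i * b i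

/-- `ℝ^{n+1}` viewed as `ℝⁿ × ℝ`, points written `(x, y)`. -/
abbrev V1 (n : ℕ) := (Fin n → ℝ) × ℝ

/-- The standard inner product on `ℝ^{n+1} = ℝⁿ × ℝ`. -/
def dot1 {n : ℕ} (k p : V1 n) : ℝ := dotn k.1 p.1 + k.2 * p.2

/-- `e^{2πit}`. -/
def expz (t : ℝ) : ℂ := Complex.exp (2 * (Real.pi : ℂ) * Complex.I * (t : ℂ))

/-- The wave `ω_k` on `ℝ^{n+1}`. -/
def wave {n : ℕ} (k : V1 n) : V1 n → ℂ := fun p => expz (dot1 k p)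

/-- The wave `ω_k̃` on `ℝⁿ`. -/
def waveN {n : ℕ} (k : Fin n → ℝ) : (Fin n → ℝ) → ℂ := fun x => expz (dotn k x)

/-- The projection operator `Π_{y0}`. -/
def Proj {n : ℕ} (y0 : ℝ) (f : V1 n → ℂ) : (Fin n → ℝ) → ℂ :=
  fun x => ∫ y in (0:ℝ)..y0, f (x, y)

/-- The lattice generated over `ℤ` by the vectors `b i`. -/
def latticeOf {n : ℕ} (b : Fin (n+1) → V1 n) : Set (V1 n) :=
  {v | ∃ c : Fin (n+1) → ℤ, v = ∑ i, (c i : ℝ) • b i}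

/-- The dual lattice `ℒ*` of a subset of `ℝ^{n+1}`. -/
def dualLat {n : ℕ} (L : Set (V1 n)) : Set (V1 n) :=
  {k | ∀ l ∈ L, ∃ m : ℤ, dot1 k l = (m : ℝ)}

/-- The dual lattice of a subset of `ℝⁿ`. -/
def dualN {n : ℕ} (Lt : Set (Fin n → ℝ)) : Set (Fin n → ℝ) :=
  {k | ∀ v ∈ Lt, ∃ m : ℤ, dotn k v = (m : ℝ)}

/-- `𝒳_ℒ`: the ℂ-linear span of the waves `ω_k`, `k ∈ ℒ*`. -/
def XL {n : ℕ} (L : Set (V1 n)) : Submodule ℂ (V1 n → ℂ) :=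
  Submodule.span ℂ (wave '' dualLat L)

/-- The ℂ-linear span of the waves `ω_k̃`, `k̃` in the dual of a planar lattice. -/
def XN {n : ℕ} (Lt : Set (Fin n → ℝ)) : Submodule ℂ ((Fin n → ℝ) → ℂ) :=
  Submodule.span ℂ (waveN '' dualN Lt)

/-- Membership in `O(n)`: a linear automorphism of `ℝⁿ` preserving the dot product. -/
def IsOrthoN {n : ℕ} (α : (Fin n → ℝ) ≃ₗ[ℝ] (Fin n → ℝ)) : Prop :=
  ∀ a b, dotn (α a) (α b) = dotn a b

/-- Membership in `O(n+1)`: a linear automorphism of `ℝ^{n+1}` preserving the inner product. -/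
def IsOrtho1 {n : ℕ} (δ : V1 n ≃ₗ[ℝ] V1 n) : Prop :=
  ∀ a b, dot1 (δ a) (δ b) = dot1 a b

/-- The holohedry `H_ℒ`: orthogonal transformations mapping `ℒ` to itself. -/
def HolL {n : ℕ} (L : Set (V1 n)) : Set (V1 n ≃ₗ[ℝ] V1 n) :=
  {γ | IsOrtho1 γ ∧ (⇑γ) '' L = L}

/-- `α₊`: acts as `α` on `ℝⁿ` and `+1` on the last coordinate. -/
def aPlus {n : ℕ} (α : (Fin n → ℝ) ≃ₗ[ℝ] (Fin n → ℝ)) : V1 n ≃ₗ[ℝ] V1 n :=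
  α.prodCongr (LinearEquiv.refl ℝ ℝ)

/-- `α₋`: acts as `α` on `ℝⁿ` and `−1` on the last coordinate. -/
def aMinus {n : ℕ} (α : (Fin n → ℝ) ≃ₗ[ℝ] (Fin n → ℝ)) : V1 n ≃ₗ[ℝ] V1 n :=
  α.prodCongr (LinearEquiv.neg ℝ)

/-- The group `J̃` of induced orthogonal symmetries. -/
def Jt {n : ℕ} (L : Set (V1 n)) (y0 : ℝ) : Set ((Fin n → ℝ) ≃ₗ[ℝ] (Fin n → ℝ)) :=
  {α | IsOrthoN α ∧
    (aPlus α ∈ HolL L ∨ ((((0 : Fin n → ℝ), y0) : V1 n) ∈ L ∧ aMinus α ∈ HolL L))}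

/-- The subset `J̃↑` of `H_ℒ`. -/
def Jup {n : ℕ} (L : Set (V1 n)) (y0 : ℝ) : Set (V1 n ≃ₗ[ℝ] V1 n) :=
  {γ | ∃ α ∈ Jt L y0,
    (γ = aPlus α ∧ aPlus α ∈ HolL L) ∨ (γ = aMinus α ∧ aMinus α ∈ HolL L)}

/-- The set `J^α_k = {δ ∈ H_ℒ : P(δk) = α k̃}`. -/
def Jset {n : ℕ} (L : Set (V1 n)) (k : V1 n) (α : (Fin n → ℝ) ≃ₗ[ℝ] (Fin n → ℝ)) :
    Set (V1 n ≃ₗ[ℝ] V1 n) :=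
  {δ ∈ HolL L | (δ k).1 = α k.1}

/-- The set `J^{Id}_k = {δ ∈ H_ℒ : P(δk) = k̃}`. -/
def JId {n : ℕ} (L : Set (V1 n)) (k : V1 n) : Set (V1 n ≃ₗ[ℝ] V1 n) :=
  {δ ∈ HolL L | (δ k).1 = k.1}

/-- The set `S_k = ⋃_{α ∈ J̃} J^α_k`. -/
def Sk {n : ℕ} (L : Set (V1 n)) (y0 : ℝ) (k : V1 n) : Set (V1 n ≃ₗ[ℝ] V1 n) :=
  ⋃ α ∈ Jt L y0, Jset L k α

/-- The isotropy subgroup `Σ_k` of `k` in `H_ℒ`. -/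
def Sigk {n : ℕ} (L : Set (V1 n)) (k : V1 n) : Set (V1 n ≃ₗ[ℝ] V1 n) :=
  {δ ∈ HolL L | δ k = k}

/-- The orbit `H_ℒ·k`. -/
def HOrb {n : ℕ} (L : Set (V1 n)) (k : V1 n) : Set (V1 n) :=
  (fun δ : V1 n ≃ₗ[ℝ] V1 n => δ k) '' HolL L

/-- The orbit `J̃·u`. -/
def JOrb {n : ℕ} (L : Set (V1 n)) (y0 : ℝ) (u : Fin n → ℝ) : Set (Fin n → ℝ) :=
  (fun α : (Fin n → ℝ) ≃ₗ[ℝ] (Fin n → ℝ) => α u) '' Jt L y0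

/-- The single mode `V`: the ℂ-span of the waves `ω_{δk}`, `δ ∈ H_ℒ`. -/
def modeV {n : ℕ} (L : Set (V1 n)) (k : V1 n) : Submodule ℂ (V1 n → ℂ) :=
  Submodule.span ℂ ((fun δ : V1 n ≃ₗ[ℝ] V1 n => wave (δ k)) '' HolL L)

/-- The projected lattice `𝓛̃`. -/
def projLat {n : ℕ} (L : Set (V1 n)) (y0 : ℝ) : Set (Fin n → ℝ) :=
  if (((0 : Fin n → ℝ), y0) : V1 n) ∈ L then Prod.fst '' L
  else Prod.fst '' (L ∩ {p : V1 n | p.2 = 0})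

/-!
Translation by `t` multiplies each wave `ω_{δk}` by the constant `ω_{δk}(-t)`, and composing with
`γ⁻¹`, `γ ∈ H_ℒ`, turns it into `ω_{γδk}`; so `V` is invariant under both. The projection `Π_{y0}`
intertwines translation by `(v, 0)` and `α₊` with translation by `v` and `α` on `ℝⁿ`. For `α₋` the
integrand is reflected in `y`; but when `(0, y0) ∈ ℒ` every element of `V` is `y0`-periodic in `y`
(as `k ∈ ℒ*`), and the integral of a periodic function over a period is reflection invariant.
-/

lemma expz_add (s t : ℝ) : expz (s + t) = expz s * expz t := by
  unfold expz
  rw [← Complex.exp_add]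
  push_cast
  ring_nf

lemma expz_intCast (m : ℤ) : expz m = 1 := by
  unfold expz
  rw [Complex.ofReal_intCast, show 2 * (Real.pi : ℂ) * Complex.I * m = m * (2 * Real.pi * Complex.I)
    by ring]
  exact Complex.exp_int_mul_two_pi_mul_I m

section Waves

variable {n : ℕ}

lemma dotn_add_right (a b c : Fin n → ℝ) : dotn a (b + c) = dotn a b + dotn a c := by
  simp only [dotn, Pi.add_apply, mul_add, Finset.sum_add_distrib]

lemma dot1_add_right (m p q : V1 n) : dot1 m (p + q) = dot1 m p + dot1 m q := by
  simp only [dot1, Prod.fst_add, Prod.snd_add, dotn_add_right, mul_add]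
  ring

lemma wave_add (m p q : V1 n) : wave m (p + q) = wave m p * wave m q := by
  simp only [wave, dot1_add_right, expz_add]

lemma wave_comp_sub (m t : V1 n) : (fun p => wave m (p - t)) = wave m (-t) • wave m := by
  funext p
  rw [sub_eq_add_neg, wave_add, Pi.smul_apply, smul_eq_mul, mul_comm]

lemma IsOrtho1.dot1_symm_right {δ : V1 n ≃ₗ[ℝ] V1 n} (hδ : IsOrtho1 δ) (a b : V1 n) :
    dot1 a (δ.symm b) = dot1 (δ a) b := by
  simpa using (hδ a (δ.symm b)).symm

lemma IsOrtho1.wave_comp_symm {δ : V1 n ≃ₗ[ℝ] V1 n} (hδ : IsOrtho1 δ) (m : V1 n) :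
    (fun p => wave m (δ.symm p)) = wave (δ m) := by
  funext p
  simp only [wave, hδ.dot1_symm_right]

end Waves

section Holohedry

variable {n : ℕ} {L : Set (V1 n)} {δ γ : V1 n ≃ₗ[ℝ] V1 n}

lemma symm_apply_mem_of_mem_HolL (hδ : δ ∈ HolL L) {l : V1 n} (hl : l ∈ L) : δ.symm l ∈ L := by
  obtain ⟨l', hl', rfl⟩ : l ∈ (⇑δ) '' L := hδ.2.symm ▸ hl
  simpa using hl'

lemma trans_mem_HolL (hδ : δ ∈ HolL L) (hγ : γ ∈ HolL L) : δ.trans γ ∈ HolL L := by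
  refine ⟨fun a b => (hγ.1 (δ a) (δ b)).trans (hδ.1 a b), ?_⟩
  show (⇑γ ∘ ⇑δ) '' L = L
  rw [Set.image_comp, hδ.2, hγ.2]

lemma wave_apply_eq_one_of_mem_dualLat {k t : V1 n} (hk : k ∈ dualLat L) (hδ : δ ∈ HolL L)
    (ht : t ∈ L) : wave (δ k) t = 1 := by
  obtain ⟨m, hm⟩ := hk (δ.symm t) (symm_apply_mem_of_mem_HolL hδ ht)
  rw [wave, ← hδ.1.dot1_symm_right, hm, expz_intCast]

end Holohedry

section Mode

variable {n : ℕ} {L : Set (V1 n)} {k : V1 n} {f : V1 n → ℂ}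

lemma wave_mem_modeV {δ : V1 n ≃ₗ[ℝ] V1 n} (hδ : δ ∈ HolL L) : wave (δ k) ∈ modeV L k :=
  Submodule.subset_span ⟨δ, hδ, rfl⟩

lemma comp_mem_modeV (T : V1 n → V1 n)
    (hT : ∀ δ ∈ HolL L, (fun p => wave (δ k) (T p)) ∈ modeV L k) (hf : f ∈ modeV L k) :
    (fun p => f (T p)) ∈ modeV L k := by
  have hmap : (modeV L k).map (LinearMap.funLeft ℂ ℂ T) ≤ modeV L k := by
    rw [modeV, Submodule.map_span, Submodule.span_le]
    rintro _ ⟨_, ⟨δ, hδ, rfl⟩, rfl⟩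
    exact hT δ hδ
  exact hmap ⟨f, hf, rfl⟩

lemma comp_sub_mem_modeV (t : V1 n) (hf : f ∈ modeV L k) : (fun p => f (p - t)) ∈ modeV L k :=
  comp_mem_modeV _ (fun _ hδ => wave_comp_sub _ t ▸ Submodule.smul_mem _ _ (wave_mem_modeV hδ)) hf

lemma comp_symm_mem_modeV {γ : V1 n ≃ₗ[ℝ] V1 n} (hγ : γ ∈ HolL L) (hf : f ∈ modeV L k) :
    (fun p => f (γ.symm p)) ∈ modeV L k :=
  comp_mem_modeV _ (fun δ hδ => by
    rw [hγ.1.wave_comp_symm (δ k), ← LinearEquiv.trans_apply]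
    exact wave_mem_modeV (trans_mem_HolL hδ hγ)) hf

lemma periodic_of_mem_modeV (hk : k ∈ dualLat L) {t : V1 n} (ht : t ∈ L) (hf : f ∈ modeV L k) :
    Function.Periodic f t := by
  have hfix : modeV L k ≤
      LinearMap.eqLocus (LinearMap.funLeft ℂ ℂ (fun p : V1 n => p + t)) LinearMap.id := by
    rw [modeV, Submodule.span_le]
    rintro _ ⟨δ, hδ, rfl⟩
    funext p
    simp [wave_add, wave_apply_eq_one_of_mem_dualLat hk hδ ht]
  exact congrFun (hfix hf)

end Mode

lemma intervalIntegral_comp_neg_of_periodic {E : Type*} [NormedAddCommGroup E] [NormedSpace ℝ E]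
    {g : ℝ → E} {T : ℝ} (hg : Function.Periodic g T) :
    ∫ y in (0 : ℝ)..T, g (-y) = ∫ y in (0 : ℝ)..T, g y := by
  rw [intervalIntegral.integral_comp_neg, neg_zero]
  simpa using hg.intervalIntegral_add_eq (-T) 0

section Projection

variable {n : ℕ} (y0 : ℝ) (f : V1 n → ℂ) (α : (Fin n → ℝ) ≃ₗ[ℝ] (Fin n → ℝ))

lemma Proj_comp_sub (v : Fin n → ℝ) :
    Proj y0 (fun p => f (p - ((v, 0) : V1 n))) = fun x => Proj y0 f (x - v) := by
  funext x
  simp only [Proj, Prod.mk_sub_mk, sub_zero]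

lemma Proj_comp_aPlus_symm :
    Proj y0 (fun p => f ((aPlus α).symm p)) = fun x => Proj y0 f (α.symm x) := by
  funext x
  simp [Proj, aPlus]

lemma Proj_comp_aMinus_symm (hf : Function.Periodic f ((0, y0) : V1 n)) :
    Proj y0 (fun p => f ((aMinus α).symm p)) = fun x => Proj y0 f (α.symm x) := by
  funext x
  have hper : Function.Periodic (fun y => f (α.symm x, y)) y0 := fun y => by
    simpa using hf (α.symm x, y)
  simpa [Proj, aMinus] using intervalIntegral_comp_neg_of_periodic hper

end Projection

theorem stmt_16_general (n : ℕ) (b : Fin (n+1) → V1 n)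
    (y0 : ℝ) (k : V1 n) (hk : k ∈ dualLat (latticeOf b)) :
    (∀ v : Fin n → ℝ,
      ∀ g ∈ Proj y0 '' (modeV (latticeOf b) k : Set (V1 n → ℂ)),
        (fun x => g (x - v)) ∈
          Proj y0 '' (modeV (latticeOf b) k : Set (V1 n → ℂ))) ∧
    (∀ α ∈ Jt (latticeOf b) y0,
      ∀ g ∈ Proj y0 '' (modeV (latticeOf b) k : Set (V1 n → ℂ)),
        (fun x => g (α.symm x)) ∈
          Proj y0 '' (modeV (latticeOf b) k : Set (V1 n → ℂ))) := by
  refine ⟨?_, ?_⟩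
  · rintro v _ ⟨f, hf, rfl⟩
    exact ⟨_, comp_sub_mem_modeV _ hf, Proj_comp_sub y0 f v⟩
  · rintro α ⟨-, hplus | ⟨hy0, hminus⟩⟩ _ ⟨f, hf, rfl⟩
    · exact ⟨_, comp_symm_mem_modeV hplus hf, Proj_comp_aPlus_symm y0 f α⟩
    · exact ⟨_, comp_symm_mem_modeV hminus hf,
        Proj_comp_aMinus_symm y0 f α (periodic_of_mem_modeV hk hy0 hf)⟩

/-- `W = Π_{y0}(V)` is invariant under all translations of `ℝⁿ`
and under `J̃`. -/
theorem stmt_16 (n : ℕ) (hn : 1 ≤ n) (b : Fin (n+1) → V1 n) (hb : LinearIndependent ℝ b)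
    (y0 : ℝ) (hy0 : 0 < y0) (k : V1 n) (hk : k ∈ dualLat (latticeOf b)) :
    (∀ v : Fin n → ℝ,
      ∀ g ∈ Proj y0 '' (modeV (latticeOf b) k : Set (V1 n → ℂ)),
        (fun x => g (x - v)) ∈
          Proj y0 '' (modeV (latticeOf b) k : Set (V1 n → ℂ))) ∧
    (∀ α ∈ Jt (latticeOf b) y0,
      ∀ g ∈ Proj y0 '' (modeV (latticeOf b) k : Set (V1 n → ℂ)),
        (fun x => g (α.symm x)) ∈
          Proj y0 '' (modeV (latticeOf b) k : Set (V1 n → ℂ))) :=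
  stmt_16_general n b y0 k hk

end
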